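/- For every integer k ≥ 1 the following chain of inequalities holds among real numbers: P(2k+1)/P(2k−1) < H(2k+2)/H(2k) < P(2k+3)/P(2k+1) < σ² < P(2k+4)/P(2k+2) < H(2k+3)/H(2k+1) < P(2k+2)/P(2k). -/
import Mathlib


/-- Pell numbers: P 0 = 0, P 1 = 1, P (m+2) = 2·P (m+1) + P m. -/
def pell : ℕ → ℕ
  | 0 => 0
  | 1 => 1
  | m + 2 => 2 * pell (m + 1) + pell m

/-- Half-companion Pell numbers: H 0 = 1, H 1 = 1, H (m+2) = 2·H (m+1) + H m. -/
def hpell : ℕ → ℕ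
  | 0 => 1
  | 1 => 1
  | m + 2 => 2 * hpell (m + 1) + hpell m

/-- The silver ratio σ = 1 + √2. -/
noncomputable def silver : ℝ := 1 + Real.sqrt 2

lemma pell_rec (n : ℕ) : pell (n+2) = 2 * pell (n+1) + pell n := rfl
lemma hpell_rec (n : ℕ) : hpell (n+2) = 2 * hpell (n+1) + hpell n := rfl

lemma pell_recz (n : ℕ) : (pell (n+2) : ℤ) = 2 * pell (n+1) + pell n := by
  rw [pell_rec]; push_cast; ring

lemma hpell_recz (n : ℕ) : (hpell (n+2) : ℤ) = 2 * hpell (n+1) + hpell n := by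
  rw [hpell_rec]; push_cast; ring

lemma pell_pos : ∀ n, 0 < pell (n+1)
  | 0 => Nat.one_pos
  | n+1 => by rw [pell_rec]; have := pell_pos n; omega

lemma hpell_pos : ∀ n, 0 < hpell n
  | 0 => Nat.one_pos
  | 1 => Nat.one_pos
  | n+2 => by rw [hpell_rec]; have := hpell_pos (n+1); omega

lemma wron (u v : ℕ → ℤ) (hu : ∀ n, u (n+2) = 2 * u (n+1) + u n)
    (hv : ∀ n, v (n+2) = 2 * v (n+1) + v n) (n : ℕ) :
    u (n+1) * v n - u n * v (n+1) = (-1)^n * (u 1 * v 0 - u 0 * v 1) := by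
  induction n with
  | zero => ring
  | succ n ih =>
    have h1 := hu n
    have h2 := hv n
    rw [show n+1+1 = n+2 from rfl, h1, h2, pow_succ]
    linear_combination -ih

lemma idA (j : ℕ) : (hpell (j+3) : ℤ) * pell j - (hpell (j+1) : ℤ) * pell (j+2)
    = -2 * (-1)^j := by
  have w1 := wron (fun n => (hpell (n+2) : ℤ)) (fun n => (pell n : ℤ))
    (fun n => by
      show (hpell (n+2+2) : ℤ) = 2 * (hpell (n+1+2) : ℤ) + (hpell (n+2) : ℤ)
      rw [show n+1+2 = n+2+1 by omega]; exact hpell_recz (n+2))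
    (fun n => pell_recz n) j
  have w2 := wron (fun n => (hpell (n+1) : ℤ)) (fun n => (pell (n+1) : ℤ))
    (fun n => by
      show (hpell (n+2+1) : ℤ) = 2 * (hpell (n+1+1) : ℤ) + (hpell (n+1) : ℤ)
      rw [show n+2+1 = n+1+2 by omega, show n+1+1 = n+1+1 from rfl]
      exact hpell_recz (n+1))
    (fun n => by
      show (pell (n+2+1) : ℤ) = 2 * (pell (n+1+1) : ℤ) + (pell (n+1) : ℤ)
      rw [show n+2+1 = n+1+2 by omega]; exact pell_recz (n+1)) j
  simp only [show j+1+2 = j+3 by omega, show j+2+1 = j+3 by omega,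
    show j+1+1 = j+2 by omega, show (1:ℕ)+2 = 3 by omega, show (0:ℕ)+2 = 2 by omega,
    show (1:ℕ)+1 = 2 by omega, show (0:ℕ)+1 = 1 by omega,
    show hpell 3 = 7 from rfl, show hpell 2 = 3 from rfl, show hpell 1 = 1 from rfl,
    show pell 0 = 0 from rfl, show pell 1 = 1 from rfl, show pell 2 = 2 from rfl] at w1 w2
  push_cast at w1 w2
  linear_combination w1 + w2

lemma idB (j : ℕ) : (pell (j+3) : ℤ) * hpell j - (pell (j+1) : ℤ) * hpell (j+2)
    = 2 * (-1)^j := by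
  have w1 := wron (fun n => (pell (n+2) : ℤ)) (fun n => (hpell n : ℤ))
    (fun n => by
      show (pell (n+2+2) : ℤ) = 2 * (pell (n+1+2) : ℤ) + (pell (n+2) : ℤ)
      rw [show n+1+2 = n+2+1 by omega]; exact pell_recz (n+2))
    (fun n => hpell_recz n) j
  have w2 := wron (fun n => (pell (n+1) : ℤ)) (fun n => (hpell (n+1) : ℤ))
    (fun n => by
      show (pell (n+2+1) : ℤ) = 2 * (pell (n+1+1) : ℤ) + (pell (n+1) : ℤ)
      rw [show n+2+1 = n+1+2 by omega]; exact pell_recz (n+1))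
    (fun n => by
      show (hpell (n+2+1) : ℤ) = 2 * (hpell (n+1+1) : ℤ) + (hpell (n+1) : ℤ)
      rw [show n+2+1 = n+1+2 by omega]; exact hpell_recz (n+1)) j
  simp only [show j+1+2 = j+3 by omega, show j+2+1 = j+3 by omega,
    show j+1+1 = j+2 by omega, show (1:ℕ)+2 = 3 by omega, show (0:ℕ)+2 = 2 by omega,
    show (1:ℕ)+1 = 2 by omega, show (0:ℕ)+1 = 1 by omega,
    show hpell 2 = 3 from rfl, show hpell 1 = 1 from rfl, show hpell 0 = 1 from rfl,
    show pell 1 = 1 from rfl, show pell 2 = 2 from rfl, show pell 3 = 5 from rfl] at w1 w2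
  push_cast at w1 w2
  linear_combination w1 + w2

lemma step : ∀ n, hpell (n+1) = hpell n + 2 * pell n ∧ pell (n+1) = pell n + hpell n
  | 0 => by constructor <;> rfl
  | n+1 => by
    obtain ⟨h1, h2⟩ := step n
    constructor
    · rw [hpell_rec]; omega
    · rw [pell_rec]; omega

lemma pell_sq (n : ℕ) : (hpell n : ℤ)^2 - 2 * (pell n : ℤ)^2 = (-1)^n := by
  induction n with
  | zero => rfl
  | succ n ih =>
    have h1 : (hpell (n+1) : ℤ) = hpell n + 2 * pell n := by
      rw [(step n).1]; push_cast; ring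
    have h2 : (pell (n+1) : ℤ) = pell n + hpell n := by
      rw [(step n).2]; push_cast; ring
    rw [h1, h2, pow_succ]
    linear_combination -ih

lemma pell_three (n : ℕ) : pell (n+2) = 3 * pell n + 2 * hpell n := by
  rw [pell_rec, (step n).2]; ring

lemma silver_sq : silver ^ 2 = 3 + 2 * Real.sqrt 2 := by
  have h2 : Real.sqrt 2 ^ 2 = 2 := Real.sq_sqrt (by norm_num)
  unfold silver
  linear_combination h2

lemma hpell_lt (n : ℕ) (hn : Odd n) : (hpell n : ℝ) < Real.sqrt 2 * pell n := by
  have hsq := pell_sq n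
  rw [hn.neg_one_pow] at hsq
  have hs : Real.sqrt 2 * (pell n : ℝ) ≥ 0 := by positivity
  refine lt_of_pow_lt_pow_left₀ 2 hs ?_
  have h2 : Real.sqrt 2 ^ 2 = 2 := Real.sq_sqrt (by norm_num)
  rw [mul_pow, h2]
  have : ((hpell n : ℤ) : ℝ)^2 = 2 * ((pell n : ℤ) : ℝ)^2 - 1 := by
    have := congrArg (fun z : ℤ => (z : ℝ)) hsq
    push_cast at this ⊢
    linarith
  push_cast at this
  nlinarith [this]

lemma lt_hpell (n : ℕ) (hn : Even n) : Real.sqrt 2 * pell n < (hpell n : ℝ) := by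
  have hsq := pell_sq n
  rw [hn.neg_one_pow] at hsq
  have hs : (0:ℝ) ≤ (hpell n : ℝ) := by positivity
  refine lt_of_pow_lt_pow_left₀ 2 hs ?_
  have h2 : Real.sqrt 2 ^ 2 = 2 := Real.sq_sqrt (by norm_num)
  rw [mul_pow, h2]
  have : ((hpell n : ℤ) : ℝ)^2 = 2 * ((pell n : ℤ) : ℝ)^2 + 1 := by
    have := congrArg (fun z : ℤ => (z : ℝ)) hsq
    push_cast at this ⊢
    linarith
  push_cast at this
  nlinarith [this]

theorem stmt_0 (k : ℕ) (hk : 1 ≤ k) :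
    (pell (2*k+1) : ℝ) / (pell (2*k-1) : ℝ) < (hpell (2*k+2) : ℝ) / (hpell (2*k) : ℝ) ∧
    (hpell (2*k+2) : ℝ) / (hpell (2*k) : ℝ) < (pell (2*k+3) : ℝ) / (pell (2*k+1) : ℝ) ∧
    (pell (2*k+3) : ℝ) / (pell (2*k+1) : ℝ) < silver ^ 2 ∧
    silver ^ 2 < (pell (2*k+4) : ℝ) / (pell (2*k+2) : ℝ) ∧
    (pell (2*k+4) : ℝ) / (pell (2*k+2) : ℝ) < (hpell (2*k+3) : ℝ) / (hpell (2*k+1) : ℝ) ∧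
    (hpell (2*k+3) : ℝ) / (hpell (2*k+1) : ℝ) < (pell (2*k+2) : ℝ) / (pell (2*k) : ℝ) := by
  obtain ⟨m, rfl⟩ : ∃ m, k = m + 1 := ⟨k - 1, by omega⟩
  rw [show 2*(m+1)+4 = 2*m+6 by ring, show 2*(m+1)+3 = 2*m+5 by ring,
      show 2*(m+1)+2 = 2*m+4 by ring, show 2*(m+1)+1 = 2*m+3 by ring,
      show 2*(m+1)-1 = 2*m+1 by omega, show 2*(m+1) = 2*m+2 by ring]
  have P1 : (0:ℝ) < pell (2*m+1) := by exact_mod_cast pell_pos (2*m)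
  have P2 : (0:ℝ) < pell (2*m+2) := by exact_mod_cast pell_pos (2*m+1)
  have P3 : (0:ℝ) < pell (2*m+3) := by exact_mod_cast pell_pos (2*m+2)
  have P4 : (0:ℝ) < pell (2*m+4) := by exact_mod_cast pell_pos (2*m+3)
  have H2 : (0:ℝ) < hpell (2*m+2) := by exact_mod_cast hpell_pos (2*m+2)
  have H1 : (0:ℝ) < hpell (2*m+1) := by exact_mod_cast hpell_pos (2*m+1)
  have H3 : (0:ℝ) < hpell (2*m+3) := by exact_mod_cast hpell_pos (2*m+3)
  have neg1 : ((-1:ℤ))^(2*m+1) = -1 := Odd.neg_one_pow ⟨m, by ring⟩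
  have neg2 : ((-1:ℤ))^(2*m+2) = 1 := Even.neg_one_pow ⟨m+1, by ring⟩
  have neg3 : ((-1:ℤ))^(2*m+3) = -1 := Odd.neg_one_pow ⟨m+1, by ring⟩
  refine ⟨?_, ?_, ?_, ?_, ?_, ?_⟩
  · -- P(2m+3)/P(2m+1) < H(2m+4)/H(2m+2)
    rw [div_lt_div_iff₀ P1 H2]
    have hA := idA (2*m+1)
    rw [neg1] at hA
    rw [show 2*m+1+3 = 2*m+4 by ring, show 2*m+1+1 = 2*m+2 by ring,
        show 2*m+1+2 = 2*m+3 by ring] at hA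
    have : (pell (2*m+3) : ℤ) * hpell (2*m+2) < (hpell (2*m+4) : ℤ) * pell (2*m+1) := by
      linarith
    exact_mod_cast this
  · -- H(2m+4)/H(2m+2) < P(2m+5)/P(2m+3)
    rw [div_lt_div_iff₀ H2 P3]
    have hB := idB (2*m+2)
    rw [neg2] at hB
    rw [show 2*m+2+3 = 2*m+5 by ring, show 2*m+2+1 = 2*m+3 by ring,
        show 2*m+2+2 = 2*m+4 by ring] at hB
    have : (hpell (2*m+4) : ℤ) * pell (2*m+3) < (pell (2*m+5) : ℤ) * hpell (2*m+2) := by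
      linarith
    exact_mod_cast this
  · -- P(2m+5)/P(2m+3) < σ²
    rw [div_lt_iff₀ P3, silver_sq]
    have h := hpell_lt (2*m+3) ⟨m+1, by ring⟩
    have hp : (pell (2*m+5) : ℝ) = 3 * pell (2*m+3) + 2 * hpell (2*m+3) := by
      exact_mod_cast congrArg (Nat.cast : ℕ → ℝ) (pell_three (2*m+3))
    rw [hp]; nlinarith
  · -- σ² < P(2m+6)/P(2m+4)
    rw [lt_div_iff₀ P4, silver_sq]
    have h := lt_hpell (2*m+4) ⟨m+2, by ring⟩
    have hp : (pell (2*m+6) : ℝ) = 3 * pell (2*m+4) + 2 * hpell (2*m+4) := by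
      exact_mod_cast congrArg (Nat.cast : ℕ → ℝ) (pell_three (2*m+4))
    rw [hp]; nlinarith
  · -- P(2m+6)/P(2m+4) < H(2m+5)/H(2m+3)
    rw [div_lt_div_iff₀ P4 H3]
    have hB := idB (2*m+3)
    rw [neg3] at hB
    rw [show 2*m+3+3 = 2*m+6 by ring, show 2*m+3+1 = 2*m+4 by ring,
        show 2*m+3+2 = 2*m+5 by ring] at hB
    have : (pell (2*m+6) : ℤ) * hpell (2*m+3) < (hpell (2*m+5) : ℤ) * pell (2*m+4) := by
      linarith
    exact_mod_cast this
  · -- H(2m+5)/H(2m+3) < P(2m+4)/P(2m+2)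
    rw [div_lt_div_iff₀ H3 P2]
    have hA := idA (2*m+2)
    rw [neg2] at hA
    rw [show 2*m+2+3 = 2*m+5 by ring, show 2*m+2+1 = 2*m+3 by ring,
        show 2*m+2+2 = 2*m+4 by ring] at hA
    have : (hpell (2*m+5) : ℤ) * pell (2*m+2) < (pell (2*m+4) : ℤ) * hpell (2*m+3) := by
      linarith
    exact_mod_cast this
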